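/- arXiv:2009.03527 — 2 statements merged into one kernel-verified Lean document; each statement's English description precedes it below -/
import Mathlib

section
/- Let $\mathbf{x} \sim \mathcal{N}(0, I_{m})$ be a standard Gaussian vector in $\mathbb{R}^{m}$ and let $\mathbf{e}_1$ be the first standard basis vector. Then for any $0 < \delta < 1$, the probability that $|\mathbf{e}_1^T \mathbf{x}| \leq \frac{\delta}{\sqrt{m e}} \|\mathbf{x}\|_2$ is at most $\delta$. -/
/-!
Chernoff bound for the quadratic form `Q(x) = ∑ aᵢ xᵢ²` with `aᵢ = 1/(2m) - [i = 1] e/(2δ²)`.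
The event is contained in `{Q ≥ 0}`, and for independent standard Gaussians
`P(Q ≥ 0) ≤ E[exp Q] = ∏ (1 - 2aᵢ)^(-1/2)`. Here `∏ (1 - 2aᵢ) = (1 - 1/m + e/δ²)(1 - 1/m)^(m-1)`,
and `(1 - 1/m)^(m-1) ≥ 1/e` bounds this product below by `1/δ²`.
-/

open MeasureTheory ProbabilityTheory Real

lemma gaussianPDFReal_mul_exp_mul_sq (a x : ℝ) :
    gaussianPDFReal 0 1 x * exp (a * x ^ 2) = (√(2 * π))⁻¹ * exp (-(1 / 2 - a) * x ^ 2) := by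
  rw [gaussianPDFReal, mul_assoc, ← exp_add]
  push_cast
  ring_nf

lemma integrable_exp_mul_sq_gaussianReal {a : ℝ} (ha : a < 1 / 2) :
    Integrable (fun x => exp (a * x ^ 2)) (gaussianReal 0 1) := by
  rw [gaussianReal_of_var_ne_zero 0 one_ne_zero, integrable_withDensity_iff
    (measurable_gaussianPDF 0 1) (ae_of_all _ fun _ => gaussianPDF_lt_top)]
  simp_rw [toReal_gaussianPDF, mul_comm (exp _), gaussianPDFReal_mul_exp_mul_sq]
  exact (integrable_exp_neg_mul_sq (by linarith)).const_mul _

-- For `a ≥ 1/2` both sides are junk zeros.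
lemma integral_exp_mul_sq_gaussianReal (a : ℝ) :
    ∫ x, exp (a * x ^ 2) ∂gaussianReal 0 1 = (√(1 - 2 * a))⁻¹ := by
  simp_rw [integral_gaussianReal_eq_integral_smul one_ne_zero, smul_eq_mul,
    gaussianPDFReal_mul_exp_mul_sq, integral_const_mul, integral_gaussian]
  rw [← sqrt_inv, ← sqrt_mul (by positivity), ← sqrt_inv]
  congr 1
  field_simp

theorem measure_pi_gaussianReal_sum_mul_sq_nonneg_le {ι : Type*} [Fintype ι] {a : ι → ℝ}
    (ha : ∀ i, a i < 1 / 2) :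
    (Measure.pi fun _ : ι => gaussianReal 0 1) {x | 0 ≤ ∑ i, a i * x i ^ 2}
      ≤ ENNReal.ofReal (√(∏ i, (1 - 2 * a i)))⁻¹ := by
  set μ := Measure.pi fun _ : ι => gaussianReal 0 1
  have hexp : ∀ x : ι → ℝ, exp (1 * ∑ i, a i * x i ^ 2) = ∏ i, exp (a i * x i ^ 2) := by
    intro x
    rw [one_mul, exp_sum]
  have hint : Integrable (fun x : ι → ℝ => exp (1 * ∑ i, a i * x i ^ 2)) μ := by
    simp_rw [hexp]
    exact Integrable.fintype_prod fun i => integrable_exp_mul_sq_gaussianReal (ha i)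
  have hmgf : mgf (fun x : ι → ℝ => ∑ i, a i * x i ^ 2) μ 1 = (√(∏ i, (1 - 2 * a i)))⁻¹ := by
    simp_rw [mgf, hexp]
    rw [integral_fintype_prod_eq_prod (fun i t => exp (a i * t ^ 2))]
    simp_rw [integral_exp_mul_sq_gaussianReal]
    rw [Finset.prod_inv_distrib, sqrt_prod _ fun i _ => by linarith [ha i]]
  rw [← ofReal_measureReal]
  gcongr
  simpa [hmgf] using measure_ge_le_exp_mul_mgf 0 zero_le_one hint

lemma exp_neg_one_le_div_add_one_pow (n : ℕ) : exp (-1) ≤ ((n : ℝ) / (n + 1)) ^ n := by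
  rcases Nat.eq_zero_or_pos n with rfl | hn
  · simp
  · have h : ((n : ℝ) / (n + 1)) ^ n = ((1 + (n : ℝ)⁻¹) ^ n)⁻¹ := by
      rw [← inv_pow]
      congr 1
      field_simp
    rw [h, exp_neg]
    exact inv_anti₀ (by positivity) one_add_inv_pow_le_exp

lemma sq_le_of_abs_le_mul_sqrt {y t s : ℝ} (hs : 0 ≤ s) (h : |y| ≤ t * √s) :
    y ^ 2 ≤ t ^ 2 * s := by
  simpa [mul_pow, sq_sqrt hs] using pow_le_pow_left₀ (abs_nonneg y) h 2

/-- The weights `aᵢ` for `m = n + 1`; the paper's `e₁` is index `0`. -/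
noncomputable def chernoffWeight (n : ℕ) (δ : ℝ) : Fin (n + 1) → ℝ :=
  Fin.cons (1 / (2 * (n + 1)) - exp 1 / (2 * δ ^ 2)) fun _ => 1 / (2 * (n + 1))

lemma chernoffWeight_lt_half (n : ℕ) {δ : ℝ} (hδ : 0 < δ) (i : Fin (n + 1)) :
    chernoffWeight n δ i < 1 / 2 := by
  induction i using Fin.cases with
  | zero =>
    have hk : 0 < exp 1 / (2 * δ ^ 2) := by positivity
    have hc : 1 / (2 * ((n : ℝ) + 1)) ≤ 1 / 2 :=
      one_div_le_one_div_of_le two_pos (by linarith [n.cast_nonneg (α := ℝ)])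
    rw [chernoffWeight, Fin.cons_zero]
    linarith
  | succ i =>
    have hn : (0 : ℝ) < n := by exact_mod_cast i.pos
    rw [chernoffWeight, Fin.cons_succ, div_lt_div_iff₀ (by positivity) two_pos]
    linarith

lemma sum_chernoffWeight_mul_sq_nonneg {n : ℕ} {δ : ℝ} (hδ : 0 < δ) (x : Fin (n + 1) → ℝ)
    (hx : |x 0| ≤ δ / √((n + 1 : ℕ) * exp 1) * √(∑ i, x i ^ 2)) :
    0 ≤ ∑ i, chernoffWeight n δ i * x i ^ 2 := by
  have hx0 := sq_le_of_abs_le_mul_sqrt (Finset.sum_nonneg fun i _ => sq_nonneg (x i)) hx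
  rw [div_pow, sq_sqrt (by positivity)] at hx0
  have hkx := mul_le_mul_of_nonneg_left hx0 (by positivity : 0 ≤ exp 1 / (2 * δ ^ 2))
  have hk : exp 1 / (2 * δ ^ 2) * (δ ^ 2 / ((n + 1 : ℕ) * exp 1)) = 1 / (2 * (n + 1)) := by
    push_cast
    field_simp
  rw [← mul_assoc, hk, Fin.sum_univ_succ] at hkx
  simp only [chernoffWeight, Fin.sum_univ_succ, Fin.cons_zero, Fin.cons_succ, ← Finset.mul_sum]
  linarith

lemma inv_sq_le_prod_one_sub_two_mul_chernoffWeight (n : ℕ) {δ : ℝ} (hδ : 0 < δ) :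
    δ⁻¹ ^ 2 ≤ ∏ i, (1 - 2 * chernoffWeight n δ i) := by
  have hc : 1 - 2 * (1 / (2 * (n + 1))) = (n : ℝ) / (n + 1) := by
    field_simp
    ring
  simp only [chernoffWeight, Fin.prod_univ_succ, Fin.cons_zero, Fin.cons_succ,
    Finset.prod_const, Finset.card_univ, Fintype.card_fin, mul_sub, sub_sub_eq_add_sub,
    add_sub_right_comm, hc]
  calc δ⁻¹ ^ 2 = 2 * (exp 1 / (2 * δ ^ 2)) * exp (-1) := by
        rw [exp_neg]
        field_simp
    _ ≤ (n / (n + 1) + 2 * (exp 1 / (2 * δ ^ 2))) * (n / (n + 1)) ^ n := by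
        gcongr
        · linarith [show (0 : ℝ) ≤ n / (n + 1) by positivity]
        · exact exp_neg_one_le_div_add_one_pow n

theorem stmt0_general (m : ℕ) (hm : 0 < m) (δ : ℝ) (hδ0 : 0 < δ) :
    (Measure.pi fun _ : Fin m => gaussianReal 0 1)
      {x | |x ⟨0, hm⟩| ≤ δ / Real.sqrt (m * Real.exp 1) * Real.sqrt (∑ i, x i ^ 2)}
      ≤ ENNReal.ofReal δ := by
  obtain ⟨n, rfl⟩ := Nat.exists_eq_add_one_of_ne_zero hm.ne'
  have hprod := inv_sq_le_prod_one_sub_two_mul_chernoffWeight n hδ0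
  calc _ ≤ _ := measure_mono fun x hx => sum_chernoffWeight_mul_sq_nonneg hδ0 x hx
    _ ≤ _ := measure_pi_gaussianReal_sum_mul_sq_nonneg_le (chernoffWeight_lt_half n hδ0)
    _ ≤ _ := ENNReal.ofReal_le_ofReal
      (inv_le_of_inv_le₀ hδ0 ((le_sqrt' (inv_pos.2 hδ0)).2 hprod))

/-- For a standard Gaussian vector `x` in `ℝ^m` (`m ≥ 1`) and `0 < δ < 1`,
the probability that `|e₁ᵀ x| ≤ (δ / √(m e)) ‖x‖₂` is at most `δ`. -/
theorem stmt0 (m : ℕ) (hm : 0 < m) (δ : ℝ) (hδ0 : 0 < δ) (hδ1 : δ < 1) :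
    (Measure.pi fun _ : Fin m => gaussianReal 0 1)
      {x | |x ⟨0, hm⟩| ≤ δ / Real.sqrt (m * Real.exp 1) * Real.sqrt (∑ i, x i ^ 2)}
      ≤ ENNReal.ofReal δ :=
  stmt0_general m hm δ hδ0
end

section
/- Let $D_X \in \mathbb{R}^{m_x \times d}$, $D_Y \in \mathbb{R}^{m_y \times d}$ with QR decompositions $D_X = Q_X R_X$, $D_Y = Q_Y R_Y$, and let $R_X R_Y^T = U \Sigma V^T$ be an SVD. For a threshold $\gamma \geq 0$, define $\widetilde{\Sigma} = \max(\Sigma - \gamma I, 0)$, $B_X = Q_X U \sqrt{\widetilde{\Sigma}}$, $B_Y = Q_Y V \sqrt{\widetilde{\Sigma}}$. Then $\|D_X D_Y^T - B_X B_Y^T\| = \|\Sigma - \widetilde{\Sigma}\| \leq \gamma$ and $\|B_X B_Y^T\|_* = \mathrm{tr}(\widetilde{\Sigma})$, while $\|D_X D_Y^T\|_* = \mathrm{tr}(\Sigma)$. -/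
/-! With `P = Q_X U` and `Q = Q_Y V`, both products are conjugates of diagonal matrices by the
same pair of matrices with orthonormal columns: `D_X D_Yᵀ = P Σ Qᵀ` and `B_X B_Yᵀ = P Σ̃ Qᵀ`.
Such a two-sided multiplication preserves the operator norm (it is `≤` by submultiplicativity,
and `≥` because `Pᵀ (P M Qᵀ) Q = M`), and soft thresholding moves each `σᵢ` by at most `γ`.
For the nuclear norm, `Q C Qᵀ` is the positive square root of `(P C Qᵀ)ᵀ (P C Qᵀ)` when `C ≥ 0`
is diagonal, so the singular values sum to `tr (Q C Qᵀ) = tr C`. -/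

open Matrix

/-- The spectral (ℓ₂ operator) norm of a real matrix. -/
noncomputable def specNorm {m n : ℕ} (A : Matrix (Fin m) (Fin n) ℝ) : ℝ :=
  ‖LinearMap.toContinuousLinearMap (Matrix.toEuclideanLin A)‖

/-- The singular values of a real matrix, in non-increasing order. -/
noncomputable def singularValues {m n : ℕ} (A : Matrix (Fin m) (Fin n) ℝ) : Fin n → ℝ :=
  let f : Fin n → ℝ := fun i =>
    Real.sqrt ((show (Aᵀ * A).IsHermitian by
      simpa [Matrix.conjTranspose_eq_transpose_of_trivial] using
        Matrix.isHermitian_conjTranspose_mul_self A).eigenvalues i)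
  fun i => (f ∘ Tuple.sort f) i.rev

/-- The nuclear norm: the sum of the singular values. -/
noncomputable def nuclearNorm {m n : ℕ} (A : Matrix (Fin m) (Fin n) ℝ) : ℝ :=
  ∑ i, singularValues A i

open scoped Matrix.Norms.L2Operator MatrixOrder ComplexOrder

namespace Matrix

variable {𝕜 : Type*} [RCLike 𝕜] {l m n p q : Type*}

lemma l2_opNorm_le_one_of_conjTranspose_mul_self_eq_one [Fintype m] [Fintype n] [DecidableEq n]
    {A : Matrix m n 𝕜} (hA : Aᴴ * A = 1) : ‖A‖ ≤ 1 := by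
  have h1 : ‖(1 : Matrix n n 𝕜)‖ ≤ 1 := by
    rw [← diagonal_one, l2_opNorm_diagonal]
    exact pi_norm_le_iff_of_nonneg zero_le_one |>.mpr fun _ => norm_one.le
  have h2 := l2_opNorm_conjTranspose_mul_self A
  rw [hA] at h2
  nlinarith [norm_nonneg A]

lemma l2_opNorm_mul_mul_le_of_le_one [Fintype l] [Fintype m] [Fintype p] [Fintype q]
    [DecidableEq l] [DecidableEq m] [DecidableEq q]
    (P : Matrix p m 𝕜) (X : Matrix m l 𝕜) (Q : Matrix l q 𝕜) (hP : ‖P‖ ≤ 1) (hQ : ‖Q‖ ≤ 1) :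
    ‖P * X * Q‖ ≤ ‖X‖ :=
  calc ‖P * X * Q‖ ≤ ‖P‖ * ‖X‖ * ‖Q‖ :=
        (l2_opNorm_mul _ _).trans (mul_le_mul_of_nonneg_right (l2_opNorm_mul _ _) (norm_nonneg _))
    _ ≤ 1 * ‖X‖ * 1 := by gcongr
    _ = ‖X‖ := by ring

lemma l2_opNorm_mul_mul_conjTranspose_of_orthonormal [Fintype l] [Fintype m] [Fintype n]
    [DecidableEq l] [DecidableEq m] [DecidableEq n] {A : Matrix m n 𝕜} {B : Matrix l n 𝕜}
    (hA : Aᴴ * A = 1) (hB : Bᴴ * B = 1) (M : Matrix n n 𝕜) : ‖A * M * Bᴴ‖ = ‖M‖ := by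
  have hA1 := l2_opNorm_le_one_of_conjTranspose_mul_self_eq_one hA
  have hB1 := l2_opNorm_le_one_of_conjTranspose_mul_self_eq_one hB
  refine le_antisymm
    (l2_opNorm_mul_mul_le_of_le_one _ _ _ hA1 (by rwa [l2_opNorm_conjTranspose])) ?_
  calc ‖M‖ = ‖Aᴴ * (A * M * Bᴴ) * B‖ := by
        rw [← Matrix.mul_assoc, ← Matrix.mul_assoc, hA, Matrix.one_mul, Matrix.mul_assoc, hB,
          Matrix.mul_one]
    _ ≤ ‖A * M * Bᴴ‖ :=
        l2_opNorm_mul_mul_le_of_le_one _ _ _ (by rwa [l2_opNorm_conjTranspose]) hB1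

lemma PosSemidef.trace_sqrt [Fintype n] [DecidableEq n] {M : Matrix n n 𝕜} (hM : M.PosSemidef) :
    (CFC.sqrt M).trace = ∑ i, (√(hM.1.eigenvalues i) : 𝕜) := by
  rw [CFC.sqrt_eq_cfc, cfc_nnreal_eq_real _ M, hM.1.cfc_eq]
  simp [IsHermitian.cfc, trace_mul_cycle, trace_diagonal, hM.eigenvalues_nonneg]

lemma transpose_mul_self_mul_eq_one {R : Type*} [CommSemiring R] [Fintype m] [Fintype n]
    [DecidableEq n] [DecidableEq l] {A : Matrix m n R} {B : Matrix n l R} (hA : Aᵀ * A = 1)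
    (hB : Bᵀ * B = 1) : (A * B)ᵀ * (A * B) = 1 := by
  rw [transpose_mul, Matrix.mul_assoc, ← Matrix.mul_assoc Aᵀ, hA, Matrix.one_mul, hB]

lemma mul_diagonal_sqrt_mul_transpose [Fintype n] [DecidableEq n] {P : Matrix m n ℝ}
    {Q : Matrix l n ℝ} {c : n → ℝ} (hc : 0 ≤ c) :
    P * diagonal (fun i => √(c i)) * (Q * diagonal (fun i => √(c i)))ᵀ = P * diagonal c * Qᵀ := by
  rw [transpose_mul, diagonal_transpose, Matrix.mul_assoc, ← Matrix.mul_assoc (diagonal _),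
    diagonal_mul_diagonal, ← Matrix.mul_assoc]
  congr 3
  exact funext fun i => Real.mul_self_sqrt (hc i)

lemma sqrt_transpose_mul_self_mul_diagonal_mul_transpose [Fintype l] [Fintype m] [Fintype n]
    [DecidableEq l] [DecidableEq n] {A : Matrix m n ℝ} {B : Matrix l n ℝ} (hA : Aᵀ * A = 1)
    (hB : Bᵀ * B = 1) {c : n → ℝ} (hc : 0 ≤ c) :
    CFC.sqrt ((A * diagonal c * Bᵀ)ᵀ * (A * diagonal c * Bᵀ)) = B * diagonal c * Bᵀ := by
  refine CFC.sqrt_unique ?_ ?_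
  · calc B * diagonal c * Bᵀ * (B * diagonal c * Bᵀ)
        = B * diagonal c * (Bᵀ * B) * diagonal c * Bᵀ := by simp only [Matrix.mul_assoc]
      _ = B * diagonal c * (Aᵀ * A) * diagonal c * Bᵀ := by rw [hA, hB]
      _ = _ := by
        simp only [transpose_mul, diagonal_transpose, transpose_transpose, Matrix.mul_assoc]
  · simpa [conjTranspose_eq_transpose_of_trivial] using
      ((posSemidef_diagonal_iff.mpr hc).mul_mul_conjTranspose_same B).nonneg

end Matrix

lemma specNorm_eq_l2_opNorm {m n : ℕ} (A : Matrix (Fin m) (Fin n) ℝ) : specNorm A = ‖A‖ := rfl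

lemma nuclearNorm_eq_trace_sqrt {m n : ℕ} (A : Matrix (Fin m) (Fin n) ℝ) :
    nuclearNorm A = (CFC.sqrt (Aᵀ * A)).trace := by
  have hA : (Aᵀ * A).PosSemidef := by
    simpa [conjTranspose_eq_transpose_of_trivial] using posSemidef_conjTranspose_mul_self A
  let f : Fin n → ℝ := fun i => √(hA.1.eigenvalues i)
  rw [hA.trace_sqrt, nuclearNorm, singularValues]
  exact (Equiv.sum_comp Fin.revPerm (f ∘ Tuple.sort f)).trans (Equiv.sum_comp (Tuple.sort f) f)

lemma nuclearNorm_mul_diagonal_mul_transpose {m n k : ℕ} {A : Matrix (Fin m) (Fin k) ℝ}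
    {B : Matrix (Fin n) (Fin k) ℝ} (hA : Aᵀ * A = 1) (hB : Bᵀ * B = 1) {c : Fin k → ℝ}
    (hc : 0 ≤ c) : nuclearNorm (A * diagonal c * Bᵀ) = ∑ i, c i := by
  rw [nuclearNorm_eq_trace_sqrt, sqrt_transpose_mul_self_mul_diagonal_mul_transpose hA hB hc,
    trace_mul_cycle, hB, Matrix.one_mul, trace_diagonal]

lemma abs_sub_max_sub_zero_le {s γ : ℝ} (hs : 0 ≤ s) (hγ : 0 ≤ γ) :
    |s - max (s - γ) 0| ≤ γ := by
  rw [abs_le]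
  rcases le_total (s - γ) 0 with h | h
  · rw [max_eq_right h]; constructor <;> linarith
  · rw [max_eq_left h]; constructor <;> linarith

theorem stmt18_general (mx my d : ℕ)
    (QX : Matrix (Fin mx) (Fin d) ℝ) (QY : Matrix (Fin my) (Fin d) ℝ)
    (RX RY U V : Matrix (Fin d) (Fin d) ℝ)
    (hQX : QXᵀ * QX = 1) (hQY : QYᵀ * QY = 1)
    (hU : Uᵀ * U = 1) (hV : Vᵀ * V = 1)
    (σ : Fin d → ℝ) (hnn : ∀ i, 0 ≤ σ i)
    (hSVD : RX * RYᵀ = U * Matrix.diagonal σ * Vᵀ)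
    (γ : ℝ) (hγ : 0 ≤ γ)
    (σt : Fin d → ℝ) (hσt : σt = fun i => max (σ i - γ) 0)
    (DX : Matrix (Fin mx) (Fin d) ℝ) (DY : Matrix (Fin my) (Fin d) ℝ)
    (hDX : DX = QX * RX) (hDY : DY = QY * RY)
    (BX : Matrix (Fin mx) (Fin d) ℝ) (BY : Matrix (Fin my) (Fin d) ℝ)
    (hBX : BX = QX * U * Matrix.diagonal fun i => Real.sqrt (σt i))
    (hBY : BY = QY * V * Matrix.diagonal fun i => Real.sqrt (σt i)) :
    specNorm (DX * DYᵀ - BX * BYᵀ) = specNorm (Matrix.diagonal σ - Matrix.diagonal σt) ∧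
    specNorm (Matrix.diagonal σ - Matrix.diagonal σt) ≤ γ ∧
    nuclearNorm (BX * BYᵀ) = Matrix.trace (Matrix.diagonal σt) ∧
    nuclearNorm (DX * DYᵀ) = Matrix.trace (Matrix.diagonal σ) := by
  have hσt_nonneg : 0 ≤ σt := fun i => hσt ▸ le_max_right _ _
  have hP : (QX * U)ᵀ * (QX * U) = 1 := transpose_mul_self_mul_eq_one hQX hU
  have hQ : (QY * V)ᵀ * (QY * V) = 1 := transpose_mul_self_mul_eq_one hQY hV
  have hD : DX * DYᵀ = QX * U * diagonal σ * (QY * V)ᵀ := by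
    rw [hDX, hDY, transpose_mul, transpose_mul, Matrix.mul_assoc QX, ← Matrix.mul_assoc RX, hSVD]
    simp only [Matrix.mul_assoc]
  have hB : BX * BYᵀ = QX * U * diagonal σt * (QY * V)ᵀ := by
    rw [hBX, hBY, mul_diagonal_sqrt_mul_transpose hσt_nonneg]
  refine ⟨?_, ?_, ?_, ?_⟩
  · rw [hD, hB, ← Matrix.sub_mul, ← Matrix.mul_sub, specNorm_eq_l2_opNorm, specNorm_eq_l2_opNorm,
      ← conjTranspose_eq_transpose_of_trivial]
    exact l2_opNorm_mul_mul_conjTranspose_of_orthonormal hP hQ _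
  · rw [specNorm_eq_l2_opNorm, diagonal_sub, l2_opNorm_diagonal, pi_norm_le_iff_of_nonneg hγ]
    intro i
    rw [Real.norm_eq_abs, hσt]
    exact abs_sub_max_sub_zero_le (hnn i) hγ
  · rw [hB, nuclearNorm_mul_diagonal_mul_transpose hP hQ hσt_nonneg, trace_diagonal]
  · rw [hD, nuclearNorm_mul_diagonal_mul_transpose hP hQ hnn, trace_diagonal]

/-- The dense-shrinkage step. With QR decompositions `D_X = Q_X R_X`,
`D_Y = Q_Y R_Y`, an SVD `R_X R_Yᵀ = U Σ Vᵀ` (Σ diagonal with non-increasing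
nonnegative entries), a threshold `γ ≥ 0`, `Σ̃ = max(Σ - γI, 0)`,
`B_X = Q_X U √Σ̃`, `B_Y = Q_Y V √Σ̃`, one has
`‖D_X D_Yᵀ - B_X B_Yᵀ‖ = ‖Σ - Σ̃‖ ≤ γ`, `‖B_X B_Yᵀ‖_* = tr(Σ̃)`, and
`‖D_X D_Yᵀ‖_* = tr(Σ)`. -/
theorem stmt18 (mx my d : ℕ)
    (QX : Matrix (Fin mx) (Fin d) ℝ) (QY : Matrix (Fin my) (Fin d) ℝ)
    (RX RY U V : Matrix (Fin d) (Fin d) ℝ)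
    (hQX : QXᵀ * QX = 1) (hQY : QYᵀ * QY = 1)
    (hU : Uᵀ * U = 1) (hU' : U * Uᵀ = 1) (hV : Vᵀ * V = 1) (hV' : V * Vᵀ = 1)
    (σ : Fin d → ℝ) (hmono : Antitone σ) (hnn : ∀ i, 0 ≤ σ i)
    (hSVD : RX * RYᵀ = U * Matrix.diagonal σ * Vᵀ)
    (γ : ℝ) (hγ : 0 ≤ γ)
    (σt : Fin d → ℝ) (hσt : σt = fun i => max (σ i - γ) 0)
    (DX : Matrix (Fin mx) (Fin d) ℝ) (DY : Matrix (Fin my) (Fin d) ℝ)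
    (hDX : DX = QX * RX) (hDY : DY = QY * RY)
    (BX : Matrix (Fin mx) (Fin d) ℝ) (BY : Matrix (Fin my) (Fin d) ℝ)
    (hBX : BX = QX * U * Matrix.diagonal fun i => Real.sqrt (σt i))
    (hBY : BY = QY * V * Matrix.diagonal fun i => Real.sqrt (σt i)) :
    specNorm (DX * DYᵀ - BX * BYᵀ) = specNorm (Matrix.diagonal σ - Matrix.diagonal σt) ∧
    specNorm (Matrix.diagonal σ - Matrix.diagonal σt) ≤ γ ∧
    nuclearNorm (BX * BYᵀ) = Matrix.trace (Matrix.diagonal σt) ∧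
    nuclearNorm (DX * DYᵀ) = Matrix.trace (Matrix.diagonal σ) :=
  stmt18_general mx my d QX QY RX RY U V hQX hQY hU hV σ hnn hSVD γ hγ σt hσt DX DY hDX hDY BX BY
    hBX hBY
end
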